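/- Under the stated hypotheses, the operator inequality Ĥ^ℏ ≥ ℏ²D_x² + μ₁ f^{2/(2+a)}(x) holds: for every u in the form domain, ⟨Ĥ^ℏ u, u⟩ ≥ ∫∫ (ℏ²|∇_x u|² + μ₁ f^{2/(2+a)}(x)|u|²) dx dy. -/

import Mathlib

open MeasureTheory Filter Metric Set

noncomputable section

/-- Partial derivative of a complex-valued function on `ℝⁿ` in coordinate `i`. -/
def pd {n : ℕ} (i : Fin n) (u : (Fin n → ℝ) → ℂ) : (Fin n → ℝ) → ℂ :=
  fun x => fderiv ℝ u x (Pi.single i 1)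

/-- Partial derivative of a real-valued function. -/
def pdR {n : ℕ} (i : Fin n) (f : (Fin n → ℝ) → ℝ) : (Fin n → ℝ) → ℝ :=
  fun x => fderiv ℝ f x (Pi.single i 1)

/-- The Laplacian. -/
def lap {n : ℕ} (u : (Fin n → ℝ) → ℂ) : (Fin n → ℝ) → ℂ :=
  fun x => ∑ i, pd i (pd i u) x

/-- The quadratic form of `c·D_x² + V` on `L²(ℝⁿ)`. -/
def qf {n : ℕ} (c : ℝ) (V : (Fin n → ℝ) → ℝ) (u : (Fin n → ℝ) → ℂ) : ℝ :=
  ∫ x, (c * ∑ i, ‖pd i u x‖ ^ 2 + V x * ‖u x‖ ^ 2)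

/-- Squared `L²` norm. -/
def nrm2 {n : ℕ} (u : (Fin n → ℝ) → ℂ) : ℝ := ∫ x, ‖u x‖ ^ 2

/-- `lambdaK n c V k` : the `k`-th eigenvalue (`k ≥ 1`, counted with multiplicity)
of the Schrödinger operator `c·D_x² + V` on `L²(ℝⁿ)`, defined through the
Courant–Fischer min–max principle over `k`-dimensional subspaces of test functions. -/
def lambdaK (n : ℕ) (c : ℝ) (V : (Fin n → ℝ) → ℝ) (k : ℕ) : ℝ :=
  sInf { r : ℝ | ∃ E : Submodule ℂ ((Fin n → ℝ) → ℂ),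
    Module.finrank ℂ E = k ∧
    (∀ u ∈ E, ContDiff ℝ (⊤ : ℕ∞) u ∧ HasCompactSupport u) ∧
    (∀ u ∈ E, qf c V u ≤ r * nrm2 u) }

/-- An eigenpair of the Schrödinger operator `c·D_x² + V` on `L²(ℝⁿ)`. -/
def IsEigenpair {n : ℕ} (c : ℝ) (V : (Fin n → ℝ) → ℝ) (μ : ℝ)
    (u : (Fin n → ℝ) → ℂ) : Prop :=
  ContDiff ℝ (⊤ : ℕ∞) u ∧ u ≠ 0 ∧ MemLp u 2 volume ∧
    ∀ x, -(c : ℂ) * lap u x + (V x : ℂ) * u x = (μ : ℂ) * u x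

def pdx {n m : ℕ} (i : Fin n) (u : (Fin n → ℝ) × (Fin m → ℝ) → ℂ) :
    (Fin n → ℝ) × (Fin m → ℝ) → ℂ :=
  fun z => fderiv ℝ u z (Pi.single i 1, 0)

def pdy {n m : ℕ} (i : Fin m) (u : (Fin n → ℝ) × (Fin m → ℝ) → ℂ) :
    (Fin n → ℝ) × (Fin m → ℝ) → ℂ :=
  fun z => fderiv ℝ u z (0, Pi.single i 1)

def lapx {n m : ℕ} (u : (Fin n → ℝ) × (Fin m → ℝ) → ℂ) :
    (Fin n → ℝ) × (Fin m → ℝ) → ℂ :=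
  fun z => ∑ i, pdx i (pdx i u) z

def lapy {n m : ℕ} (u : (Fin n → ℝ) × (Fin m → ℝ) → ℂ) :
    (Fin n → ℝ) × (Fin m → ℝ) → ℂ :=
  fun z => ∑ i, pdy i (pdy i u) z

/-- The quadratic form of `c₁·D_x² + c₂·D_y² + W` on `L²(ℝⁿ×ℝᵐ)`. -/
def qf2 (n m : ℕ) (c1 c2 : ℝ) (W : (Fin n → ℝ) × (Fin m → ℝ) → ℝ)
    (u : (Fin n → ℝ) × (Fin m → ℝ) → ℂ) : ℝ :=
  ∫ z, (c1 * ∑ i, ‖pdx i u z‖ ^ 2 + c2 * ∑ i, ‖pdy i u z‖ ^ 2 + W z * ‖u z‖ ^ 2)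

def nrm22 {n m : ℕ} (u : (Fin n → ℝ) × (Fin m → ℝ) → ℂ) : ℝ := ∫ z, ‖u z‖ ^ 2

/-- `k`-th min–max eigenvalue of `c₁·D_x² + c₂·D_y² + W` on `L²(ℝⁿ×ℝᵐ)`. -/
def lambdaK2 (n m : ℕ) (c1 c2 : ℝ) (W : (Fin n → ℝ) × (Fin m → ℝ) → ℝ) (k : ℕ) : ℝ :=
  sInf { r : ℝ | ∃ E : Submodule ℂ ((Fin n → ℝ) × (Fin m → ℝ) → ℂ),
    Module.finrank ℂ E = k ∧
    (∀ u ∈ E, ContDiff ℝ (⊤ : ℕ∞) u ∧ HasCompactSupport u) ∧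
    (∀ u ∈ E, qf2 n m c1 c2 W u ≤ r * nrm22 u) }

/-- An eigenpair of `c₁·D_x² + c₂·D_y² + W` on `L²(ℝⁿ×ℝᵐ)`. -/
def IsEigenpair2 {n m : ℕ} (c1 c2 : ℝ) (W : (Fin n → ℝ) × (Fin m → ℝ) → ℝ) (μ : ℝ)
    (u : (Fin n → ℝ) × (Fin m → ℝ) → ℂ) : Prop :=
  ContDiff ℝ (⊤ : ℕ∞) u ∧ u ≠ 0 ∧ MemLp u 2 volume ∧
    ∀ z, -(c1 : ℂ) * lapx u z - (c2 : ℂ) * lapy u z + (W z : ℂ) * u z = (μ : ℂ) * u z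

/-- Hypotheses on `g` : smooth away from `0`, positive and homogeneous of degree `a`. -/
structure GHyp (m : ℕ) (a : ℝ) (g : (Fin m → ℝ) → ℝ) : Prop where
  a_pos : 0 < a
  smooth : ContDiffOn ℝ (⊤ : ℕ∞) g {(0 : Fin m → ℝ)}ᶜ
  pos : ∀ y : Fin m → ℝ, y ≠ 0 → 0 < g y
  homog : ∀ μ : ℝ, 0 < μ → ∀ y : Fin m → ℝ, g (μ • y) = μ ^ a * g y

/-- Hypotheses on `f` : smooth, tempered derivatives, normalized nondegenerate
minimum at `0`, and `f(0) = 1 < liminf_{|x|→∞} f`. -/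
structure FHyp (n : ℕ) (f : (Fin n → ℝ) → ℝ) : Prop where
  smooth : ContDiff ℝ (⊤ : ℕ∞) f
  derivBound : ∀ k : ℕ, ∃ C : ℝ, ∀ x, ‖iteratedFDeriv ℝ k f x‖ ≤ C * (|f x| + 1)
  min0 : f 0 = 1
  ge_one : ∀ x, 1 ≤ f x
  liminf_gt : ∃ c > 1, ∀ᶠ x in cocompact (Fin n → ℝ), c ≤ f x
  hessPos : ∀ v : Fin n → ℝ, v ≠ 0 → 0 < iteratedFDeriv ℝ 2 f 0 ![v, v]

/-- The potential `f(x)g(y)` on `ℝⁿ×ℝᵐ`. -/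
def Wprod {n m : ℕ} (f : (Fin n → ℝ) → ℝ) (g : (Fin m → ℝ) → ℝ) :
    (Fin n → ℝ) × (Fin m → ℝ) → ℝ :=
  fun z => f z.1 * g z.2

/-- The effective potential `μ·f(x)^{2/(2+a)}`. -/
def effPot {n : ℕ} (f : (Fin n → ℝ) → ℝ) (a μ : ℝ) : (Fin n → ℝ) → ℝ :=
  fun x => μ * f x ^ (2 / (2 + a))

/-- The harmonic-oscillator potential `(μ₁/(2+a))⟨∂²f(0)x, x⟩`. -/
def hoPot {n : ℕ} (f : (Fin n → ℝ) → ℝ) (a μ1 : ℝ) : (Fin n → ℝ) → ℝ :=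
  fun x => μ1 / (2 + a) * iteratedFDeriv ℝ 2 f 0 ![x, x]

/-!
Fix `x`. As `g` is homogeneous of degree `a`, the dilation `y ↦ c ^ (-1 / (2 + a)) • y` turns
`D_y² + c g(y)` into `c ^ (2 / (2 + a)) (D_y² + g(y))`, so by the min–max characterisation of `μ₁`
the transverse form `∫ (|∇_y u|² + f(x) g(y) |u|²) dy` is at least `μ₁ f(x) ^ (2 / (2 + a)) ∫ |u|² dy`.
Integrating this fibrewise bound in `x` (Fubini) and adding `ℏ² ∫ |∇_x u|²` gives the estimate.
-/

open Topology

section Homogeneous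

variable {E : Type*} {g : E → ℝ} {a : ℝ}

lemma map_zero_of_homogeneous [AddCommGroup E] [Module ℝ E] (ha : 0 < a)
    (hg : ∀ μ : ℝ, 0 < μ → ∀ y : E, g (μ • y) = μ ^ a * g y) : g 0 = 0 := by
  have h := hg 2 two_pos 0
  rw [smul_zero] at h
  have h2 : (1 : ℝ) < 2 ^ a := Real.one_lt_rpow (by norm_num) ha
  nlinarith

/-- Bounded on the unit sphere, `g` satisfies `|g y| ≤ C ‖y‖ ^ a`. -/
lemma continuous_of_homogeneous [NormedAddCommGroup E] [NormedSpace ℝ E] [ProperSpace E]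
    (ha : 0 < a)
    (hg : ∀ μ : ℝ, 0 < μ → ∀ y : E, g (μ • y) = μ ^ a * g y)
    (hcont : ContinuousOn g {0}ᶜ) : Continuous g := by
  refine continuous_iff_continuousAt.2 fun y => ?_
  rcases ne_or_eq y 0 with hy | rfl
  · exact hcont.continuousAt (isOpen_compl_singleton.mem_nhds hy)
  have hsphere : sphere (0 : E) 1 ⊆ {0}ᶜ := fun z hz h => by simp_all
  obtain ⟨C, hC⟩ := (isCompact_sphere (0 : E) 1).exists_bound_of_continuousOn
    (hcont.mono hsphere)
  have hbound : ∀ z : E, ‖g z‖ ≤ ‖z‖ ^ a * C := by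
    intro z
    rcases eq_or_ne z 0 with rfl | hz
    · simp [map_zero_of_homogeneous ha hg, Real.zero_rpow ha.ne']
    have hz' : 0 < ‖z‖ := norm_pos_iff.2 hz
    have hunit : ‖z‖⁻¹ • z ∈ sphere (0 : E) 1 := by
      simp [norm_smul, hz'.ne']
    have hscale : g z = ‖z‖ ^ a * g (‖z‖⁻¹ • z) := by
      rw [← hg _ hz', smul_smul, mul_inv_cancel₀ hz'.ne', one_smul]
    rw [hscale, norm_mul, Real.norm_of_nonneg (by positivity)]
    exact mul_le_mul_of_nonneg_left (hC _ hunit) (by positivity)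
  have hlim : Tendsto (fun z : E => ‖z‖ ^ a * C) (𝓝 0) (𝓝 0) := by
    have : Continuous fun z : E => ‖z‖ ^ a * C :=
      (continuous_norm.rpow_const fun _ => Or.inr ha.le).mul continuous_const
    simpa [Real.zero_rpow ha.ne'] using this.tendsto 0
  rw [ContinuousAt, map_zero_of_homogeneous ha hg]
  exact squeeze_zero_norm hbound hlim

end Homogeneous

lemma integrable_of_eq_zero_off_tsupport {X : Type*} [TopologicalSpace X] [MeasureSpace X]
    [OpensMeasurableSpace X] [IsFiniteMeasureOnCompacts (volume : Measure X)] {F : X → ℝ}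
    {u : X → ℂ} (hF : Continuous F) (hu : HasCompactSupport u)
    (hFu : ∀ x ∉ tsupport u, F x = 0) : Integrable F :=
  hF.integrable_of_hasCompactSupport <| hu.mono' fun x hx => by_contra fun h => hx (hFu x h)

section TestFunctions

variable {k : ℕ}

lemma pd_const_smul (i : Fin k) {v : (Fin k → ℝ) → ℂ} (hv : Differentiable ℝ v) (c : ℂ)
    (x : Fin k → ℝ) : pd i (c • v) x = c * pd i v x := by
  simp [pd, fderiv_const_smul (hv x)]

lemma pd_comp_smul (i : Fin k) (v : (Fin k → ℝ) → ℂ) (s : ℝ) (x : Fin k → ℝ) :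
    pd i (fun y => v (s • y)) x = s • pd i v (s • x) := by
  simp [pd, fderiv_comp_smul]

lemma nrm2_pos {v : (Fin k → ℝ) → ℂ} (hv : Continuous v) (hvs : HasCompactSupport v)
    (hv0 : v ≠ 0) : 0 < nrm2 v := by
  have hint : Integrable fun x => ‖v x‖ ^ 2 :=
    integrable_of_eq_zero_off_tsupport (by fun_prop) hvs fun x hx => by
      simp [image_eq_zero_of_notMem_tsupport hx]
  rw [nrm2, integral_pos_iff_support_of_nonneg (fun x => by positivity) hint]
  have hsupp : Function.support (fun x => ‖v x‖ ^ 2) = Function.support v := by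
    ext x; simp [Function.mem_support]
  rw [hsupp]
  obtain ⟨x, hx⟩ := Function.ne_iff.mp hv0
  exact (isOpen_compl_singleton.preimage hv).measure_pos volume ⟨x, hx⟩

lemma nrm2_smul (v : (Fin k → ℝ) → ℂ) (c : ℂ) : nrm2 (c • v) = ‖c‖ ^ 2 * nrm2 v := by
  simp only [nrm2, Pi.smul_apply, smul_eq_mul, norm_mul, mul_pow, integral_const_mul]

lemma qf_smul (c : ℝ) (V : (Fin k → ℝ) → ℝ) {v : (Fin k → ℝ) → ℂ} (hv : Differentiable ℝ v)
    (z : ℂ) : qf c V (z • v) = ‖z‖ ^ 2 * qf c V v := by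
  rw [qf, qf, ← integral_const_mul]
  congr 1 with x
  simp only [pd_const_smul _ hv, Pi.smul_apply, smul_eq_mul, norm_mul, mul_pow, ← Finset.mul_sum]
  ring

lemma qf_nonneg {c : ℝ} (hc : 0 ≤ c) {V : (Fin k → ℝ) → ℝ} (hV : 0 ≤ V)
    (v : (Fin k → ℝ) → ℂ) : 0 ≤ qf c V v :=
  integral_nonneg fun x =>
    add_nonneg (mul_nonneg hc (by positivity)) (mul_nonneg (hV x) (by positivity))

lemma lambdaK_one_mul_nrm2_le_qf {c : ℝ} (hc : 0 ≤ c) {V : (Fin k → ℝ) → ℝ} (hV : 0 ≤ V)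
    {v : (Fin k → ℝ) → ℂ} (hv : ContDiff ℝ (⊤ : ℕ∞) v) (hvs : HasCompactSupport v) :
    lambdaK k c V 1 * nrm2 v ≤ qf c V v := by
  rcases eq_or_ne v 0 with rfl | hv0
  · simpa [nrm2] using qf_nonneg hc hV 0
  have hdiff : Differentiable ℝ v := hv.differentiable (by simp)
  have hpos : 0 < nrm2 v := nrm2_pos hv.continuous hvs hv0
  have hbdd : BddBelow { r : ℝ | ∃ E : Submodule ℂ ((Fin k → ℝ) → ℂ),
      Module.finrank ℂ E = 1 ∧ (∀ u ∈ E, ContDiff ℝ (⊤ : ℕ∞) u ∧ HasCompactSupport u) ∧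
      (∀ u ∈ E, qf c V u ≤ r * nrm2 u) } := by
    refine ⟨0, ?_⟩
    rintro r ⟨E, hrank, hreg, hineq⟩
    obtain ⟨u, huE, hu0⟩ := (Submodule.ne_bot_iff E).mp (by rintro rfl; simp at hrank)
    have := nrm2_pos (hreg u huE).1.continuous (hreg u huE).2 hu0
    nlinarith [hineq u huE, qf_nonneg hc hV u]
  have hle : lambdaK k c V 1 ≤ qf c V v / nrm2 v := by
    refine csInf_le hbdd ⟨Submodule.span ℂ {v}, finrank_span_singleton hv0, ?_, ?_⟩
    · intro u hu
      obtain ⟨z, rfl⟩ := Submodule.mem_span_singleton.mp hu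
      exact ⟨hv.const_smul z, hvs.smul_left⟩
    · intro u hu
      obtain ⟨z, rfl⟩ := Submodule.mem_span_singleton.mp hu
      rw [qf_smul c V hdiff, nrm2_smul]
      exact le_of_eq (by field_simp)
  exact (le_div_iff₀ hpos).mp hle

lemma nrm2_comp_smul (v : (Fin k → ℝ) → ℂ) (s : ℝ) :
    nrm2 (fun y => v (s • y)) = |(s ^ k)⁻¹| * nrm2 v := by
  simpa [nrm2, Module.finrank_fin_fun] using
    Measure.integral_comp_smul volume (fun y => ‖v y‖ ^ 2) s

lemma qf_comp_smul {a : ℝ} {V : (Fin k → ℝ) → ℝ}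
    (hV : ∀ μ : ℝ, 0 < μ → ∀ y, V (μ • y) = μ ^ a * V y) (v : (Fin k → ℝ) → ℂ) {s : ℝ}
    (hs : 0 < s) :
    qf 1 V (fun y => v (s • y)) =
      |(s ^ k)⁻¹| * s ^ 2 * qf 1 (fun y => (s ^ (2 + a))⁻¹ * V y) v := by
  let F : (Fin k → ℝ) → ℝ := fun z =>
    1 * ∑ i, ‖pd i v z‖ ^ 2 + (s ^ (2 + a))⁻¹ * V z * ‖v z‖ ^ 2
  have hpoint : ∀ y, 1 * ∑ i, ‖pd i (fun y => v (s • y)) y‖ ^ 2 + V y * ‖v (s • y)‖ ^ 2 =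
      s ^ 2 * F (s • y) := by
    intro y
    have hVy : V y = (s ^ a)⁻¹ * V (s • y) := by
      rw [hV s hs, inv_mul_cancel_left₀ (Real.rpow_pos_of_pos hs a).ne']
    simp only [F, pd_comp_smul, norm_smul, Real.norm_of_nonneg hs.le, mul_pow, ← Finset.mul_sum,
      hVy, Real.rpow_add hs, Real.rpow_two]
    field_simp
  rw [qf, integral_congr_ae (.of_forall hpoint), integral_const_mul,
    Measure.integral_comp_smul volume F s, Module.finrank_fin_fun, smul_eq_mul, qf]
  ring

lemma lambdaK_one_mul_rpow_mul_nrm2_le_qf {a : ℝ} (ha : 0 < a) {V : (Fin k → ℝ) → ℝ}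
    (hV0 : 0 ≤ V) (hV : ∀ μ : ℝ, 0 < μ → ∀ y, V (μ • y) = μ ^ a * V y)
    {v : (Fin k → ℝ) → ℂ} (hv : ContDiff ℝ (⊤ : ℕ∞) v) (hvs : HasCompactSupport v)
    {c : ℝ} (hc : 0 < c) :
    lambdaK k 1 V 1 * c ^ (2 / (2 + a)) * nrm2 v ≤ qf 1 (fun y => c * V y) v := by
  have h2a : 0 < 2 + a := by linarith
  set s := c ^ (-(2 + a)⁻¹) with hs_def
  have hs : 0 < s := Real.rpow_pos_of_pos hc _
  have hsc : (s ^ (2 + a))⁻¹ = c := by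
    rw [hs_def, ← Real.rpow_mul hc.le, neg_mul, inv_mul_cancel₀ h2a.ne', Real.rpow_neg_one,
      inv_inv]
  have hcs : c ^ (2 / (2 + a)) * s ^ 2 = 1 := by
    rw [hs_def, ← Real.rpow_natCast, ← Real.rpow_mul hc.le, ← Real.rpow_add hc]
    convert Real.rpow_zero c using 2
    push_cast
    ring
  have hrescaled := lambdaK_one_mul_nrm2_le_qf (v := fun y => v (s • y)) zero_le_one hV0
    (hv.comp (contDiff_const_smul s)) (hvs.comp_smul hs.ne')
  rw [nrm2_comp_smul, qf_comp_smul hV v hs, hsc] at hrescaled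
  have hjac : 0 < |(s ^ k)⁻¹| := by positivity
  have hmain : lambdaK k 1 V 1 * nrm2 v ≤ s ^ 2 * qf 1 (fun y => c * V y) v :=
    le_of_mul_le_mul_left (by linarith) hjac
  calc lambdaK k 1 V 1 * c ^ (2 / (2 + a)) * nrm2 v
      = c ^ (2 / (2 + a)) * (lambdaK k 1 V 1 * nrm2 v) := by ring
    _ ≤ c ^ (2 / (2 + a)) * (s ^ 2 * qf 1 (fun y => c * V y) v) := by gcongr
    _ = qf 1 (fun y => c * V y) v := by rw [← mul_assoc, hcs, one_mul]

end TestFunctions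

section Product

variable {n m : ℕ} {u : (Fin n → ℝ) × (Fin m → ℝ) → ℂ}

lemma pdy_eq_pd_slice (hu : Differentiable ℝ u) (i : Fin m) (x : Fin n → ℝ)
    (y : Fin m → ℝ) : pdy i u (x, y) = pd i (fun y => u (x, y)) y := by
  have hslice := (hu (x, y)).hasFDerivAt.comp y (hasFDerivAt_prodMk_right (𝕜 := ℝ) x y)
  rw [pdy, pd, show (fun y => u (x, y)) = u ∘ Prod.mk x from rfl, hslice.fderiv]
  simp

lemma HasCompactSupport.slice (hus : HasCompactSupport u) (x : Fin n → ℝ) :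
    HasCompactSupport fun y => u (x, y) :=
  .intro (hus.image continuous_snd) fun y hy =>
    by_contra fun h => hy ⟨(x, y), subset_tsupport u h, rfl⟩

lemma continuous_pdx (hu : ContDiff ℝ (⊤ : ℕ∞) u) (i : Fin n) : Continuous (pdx i u) :=
  (hu.continuous_fderiv (by simp)).clm_apply continuous_const

lemma continuous_pdy (hu : ContDiff ℝ (⊤ : ℕ∞) u) (i : Fin m) : Continuous (pdy i u) :=
  (hu.continuous_fderiv (by simp)).clm_apply continuous_const

lemma pdx_eq_zero_of_notMem_tsupport (i : Fin n) {z : (Fin n → ℝ) × (Fin m → ℝ)}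
    (hz : z ∉ tsupport u) : pdx i u z = 0 := by
  simp [pdx, fderiv_of_notMem_tsupport ℝ hz]

lemma pdy_eq_zero_of_notMem_tsupport (i : Fin m) {z : (Fin n → ℝ) × (Fin m → ℝ)}
    (hz : z ∉ tsupport u) : pdy i u z = 0 := by
  simp [pdy, fderiv_of_notMem_tsupport ℝ hz]

lemma integral_le_qf2_of_slice {c : ℝ} {W : (Fin n → ℝ) × (Fin m → ℝ) → ℝ} (hW : Continuous W)
    {U : (Fin n → ℝ) → ℝ} (hU : Continuous U)
    (hslice : ∀ x (v : (Fin m → ℝ) → ℂ), ContDiff ℝ (⊤ : ℕ∞) v → HasCompactSupport v →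
      U x * nrm2 v ≤ qf 1 (fun y => W (x, y)) v)
    (hu : ContDiff ℝ (⊤ : ℕ∞) u) (hus : HasCompactSupport u) :
    ∫ z, (c * ∑ i, ‖pdx i u z‖ ^ 2 + U z.1 * ‖u z‖ ^ 2) ≤ qf2 n m c 1 W u := by
  have hzero {F : _ → ℝ} (hF : Continuous F)
      (h : ∀ z, u z = 0 → (∀ i, pdx i u z = 0) → (∀ i, pdy i u z = 0) → F z = 0) :
      Integrable F :=
    integrable_of_eq_zero_off_tsupport hF hus fun z hz =>
      h z (image_eq_zero_of_notMem_tsupport hz) (fun i => pdx_eq_zero_of_notMem_tsupport i hz)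
        (fun i => pdy_eq_zero_of_notMem_tsupport i hz)
  have := hu.continuous
  have := continuous_pdx hu
  have := continuous_pdy hu
  have hK : Integrable fun z => c * ∑ i, ‖pdx i u z‖ ^ 2 :=
    hzero (by fun_prop) fun z _ h _ => by simp [h]
  have hP : Integrable fun z => ∑ i, ‖pdy i u z‖ ^ 2 + W z * ‖u z‖ ^ 2 :=
    hzero (by fun_prop) fun z h0 _ h => by simp [h, h0]
  have hQ : Integrable fun z : (Fin n → ℝ) × (Fin m → ℝ) => U z.1 * ‖u z‖ ^ 2 :=
    hzero (by fun_prop) fun z h0 _ _ => by simp [h0]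
  have hfibre : ∀ x, ∫ y, U (x, y).1 * ‖u (x, y)‖ ^ 2 ≤
      ∫ y, (∑ i, ‖pdy i u (x, y)‖ ^ 2 + W (x, y) * ‖u (x, y)‖ ^ 2) := by
    intro x
    have h := hslice x (fun y => u (x, y)) (hu.comp (contDiff_prodMk_right x)) (hus.slice x)
    simpa only [nrm2, qf, ← integral_const_mul, one_mul,
      ← pdy_eq_pd_slice (hu.differentiable (by simp))] using h
  have hPQ : ∫ z, U z.1 * ‖u z‖ ^ 2 ≤ ∫ z, (∑ i, ‖pdy i u z‖ ^ 2 + W z * ‖u z‖ ^ 2) := by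
    rw [Measure.volume_eq_prod] at hP hQ ⊢
    rw [integral_prod _ hQ, integral_prod _ hP]
    exact integral_mono hQ.integral_prod_left hP.integral_prod_left hfibre
  calc ∫ z, (c * ∑ i, ‖pdx i u z‖ ^ 2 + U z.1 * ‖u z‖ ^ 2)
      = (∫ z, c * ∑ i, ‖pdx i u z‖ ^ 2) + ∫ z, U z.1 * ‖u z‖ ^ 2 := integral_add hK hQ
    _ ≤ (∫ z, c * ∑ i, ‖pdx i u z‖ ^ 2) +
        ∫ z, (∑ i, ‖pdy i u z‖ ^ 2 + W z * ‖u z‖ ^ 2) := by gcongr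
    _ = qf2 n m c 1 W u := by
      rw [qf2, ← integral_add hK hP]
      simp only [one_mul, add_assoc]

end Product

lemma GHyp.continuous {m : ℕ} {a : ℝ} {g : (Fin m → ℝ) → ℝ} (hg : GHyp m a g) : Continuous g :=
  continuous_of_homogeneous hg.a_pos hg.homog hg.smooth.continuousOn

lemma GHyp.nonneg {m : ℕ} {a : ℝ} {g : (Fin m → ℝ) → ℝ} (hg : GHyp m a g) : 0 ≤ g := by
  intro y
  rcases eq_or_ne y 0 with rfl | hy
  · exact (map_zero_of_homogeneous hg.a_pos hg.homog).ge
  · exact (hg.pos y hy).le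

theorem statement12_general {n m : ℕ} (a : ℝ)
    (f : (Fin n → ℝ) → ℝ) (g : (Fin m → ℝ) → ℝ)
    (hg : GHyp m a g)
    (hfsmooth : ContDiff ℝ (⊤ : ℕ∞) f)
    (hfpos : ∃ c > (0 : ℝ), ∀ x, c ≤ f x)
    (ℏ : ℝ) :
    ∀ u : (Fin n → ℝ) × (Fin m → ℝ) → ℂ,
      ContDiff ℝ (⊤ : ℕ∞) u → HasCompactSupport u →
      (∫ z, (ℏ ^ 2 * ∑ i, ‖pdx i u z‖ ^ 2 +
          lambdaK m 1 g 1 * f z.1 ^ (2 / (2 + a)) * ‖u z‖ ^ 2)) ≤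
        qf2 n m (ℏ ^ 2) 1 (Wprod f g) u := by
  intro u hu hus
  obtain ⟨c, hc, hfc⟩ := hfpos
  have hf : ∀ x, 0 < f x := fun x => hc.trans_le (hfc x)
  refine integral_le_qf2_of_slice (U := fun x => lambdaK m 1 g 1 * f x ^ (2 / (2 + a)))
    ?_ ?_ (fun x v hv hvs => ?_) hu hus
  · exact (hfsmooth.continuous.comp continuous_fst).mul (hg.continuous.comp continuous_snd)
  · exact (hfsmooth.continuous.rpow_const fun x => .inl (hf x).ne').const_mul _
  · exact lambdaK_one_mul_rpow_mul_nrm2_le_qf hg.a_pos hg.nonneg hg.homog hv hvs (hf x)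

/-- estimate (1.10). The form inequality
`Ĥ^ℏ ≥ ℏ²D_x² + μ₁ f^{2/(2+a)}(x)` : for every test function `u`,
`⟨Ĥ^ℏu, u⟩ ≥ ∫∫ (ℏ²|∇_x u|² + μ₁ f^{2/(2+a)}(x)|u|²) dx dy`. -/
theorem statement12 {n m : ℕ} (hn : 1 ≤ n) (hm : 1 ≤ m) (a : ℝ)
    (f : (Fin n → ℝ) → ℝ) (g : (Fin m → ℝ) → ℝ)
    (hg : GHyp m a g)
    (hfsmooth : ContDiff ℝ (⊤ : ℕ∞) f)
    (hfpos : ∃ c > (0 : ℝ), ∀ x, c ≤ f x)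
    (hfder : ∀ k : ℕ, ∃ C : ℝ, ∀ x, ‖iteratedFDeriv ℝ k f x‖ ≤ C * (|f x| + 1))
    (ℏ : ℝ) (hℏ : 0 < ℏ) :
    ∀ u : (Fin n → ℝ) × (Fin m → ℝ) → ℂ,
      ContDiff ℝ (⊤ : ℕ∞) u → HasCompactSupport u →
      (∫ z, (ℏ ^ 2 * ∑ i, ‖pdx i u z‖ ^ 2 +
          lambdaK m 1 g 1 * f z.1 ^ (2 / (2 + a)) * ‖u z‖ ^ 2)) ≤
        qf2 n m (ℏ ^ 2) 1 (Wprod f g) u :=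
  statement12_general a f g hg hfsmooth hfpos ℏ
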